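/- Let G = (V, E) be an undirected graph with V = {v_1,…,v_{n'}}, E = {e_1,…,e_{m'}}, and let k be an integer with 1 ≤ k ≤ n'. Then G admits an independent set of size at least k if and only if the constructed SMI-Diverse instance admits a feasible and stable matching. -/

import Mathlib

open scoped Classical

noncomputable section

/-- An SMTI-Diverse instance: students `S`, colleges `C`, types `T`.
Preferences are encoded by rank functions (smaller rank = more preferred);
ties are allowed.  `acc` is the (symmetric) acceptability relation, `tau`
the 0/1 type vectors (encoded as `Bool`), `lq`/`uq` the lower/upper quota
vectors and `cap` the capacities. -/
structure SMTI (S C T : Type) [Fintype S] [Fintype C] [Fintype T] where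
  acc : S → C → Prop
  tau : S → T → Bool
  rankS : S → C → ℕ
  rankC : C → S → ℕ
  lq : C → T → ℕ
  uq : C → T → ℕ
  cap : C → ℕ

namespace SMTI

variable {S C T : Type} [Fintype S] [Fintype C] [Fintype T]

/-- `f : S → Option C` encodes a matching: every assigned college is acceptable. -/
def IsMatching (I : SMTI S C T) (f : S → Option C) : Prop :=
  ∀ u w, f u = some w → I.acc u w

/-- The set `M(w)` of students assigned to college `w`. -/
def assigned (I : SMTI S C T) (f : S → Option C) (w : C) : Finset S :=
  Finset.univ.filter fun u => f u = some w

/-- The number of students of type `z` assigned to `w`. -/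
def typeLoad (I : SMTI S C T) (f : S → Option C) (w : C) (z : T) : ℕ :=
  ∑ u ∈ I.assigned f w, (I.tau u z).toNat

/-- Feasibility: capacities respected and quotas met at all colleges. -/
def Feasible (I : SMTI S C T) (f : S → Option C) : Prop :=
  ∀ w, (I.assigned f w).card ≤ I.cap w ∧
    ∀ z, I.lq w z ≤ I.typeLoad f w z ∧ I.typeLoad f w z ≤ I.uq w z

/-- `u` strictly prefers `w` to its assigned college (in particular if unmatched). -/
def PrefersTo (I : SMTI S C T) (f : S → Option C) (u : S) (w : C) : Prop :=
  ∀ w', f u = some w' → I.rankS u w < I.rankS u w'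

/-- `{u,w}` is a blocking pair of `f` witnessed by `U' ⊆ M(w)`. -/
def BlocksWith (I : SMTI S C T) (f : S → Option C) (u : S) (w : C) (U' : Finset S) : Prop :=
  f u ≠ some w ∧ I.acc u w ∧ I.PrefersTo f u w ∧
  U' ⊆ I.assigned f w ∧
  (∀ u' ∈ U', I.rankC w u < I.rankC w u') ∧
  (I.assigned f w \ U').card + 1 ≤ I.cap w ∧
  ∀ z, I.lq w z ≤ (I.tau u z).toNat + ∑ u' ∈ I.assigned f w \ U', (I.tau u' z).toNat ∧
    (I.tau u z).toNat + ∑ u' ∈ I.assigned f w \ U', (I.tau u' z).toNat ≤ I.uq w z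

/-- `{u,w}` is a blocking pair of `f` (with some witness). -/
def BlockingPair (I : SMTI S C T) (f : S → Option C) (u : S) (w : C) : Prop :=
  ∃ U', I.BlocksWith f u w U'

/-- Stability: no blocking pair at all. -/
def Stable (I : SMTI S C T) (f : S → Option C) : Prop :=
  ∀ u w, ¬ I.BlockingPair f u w

end SMTI

section IndepSet

/-- Students: `v_i = Sum.inl (i, 0)`, `u_i = Sum.inl (i, 1)`, `x_i = Sum.inl (i, 2)`,
`y_i = Sum.inl (i, 3)`, plus special students `r1 = Sum.inr 0`, `r2 = Sum.inr 1`,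
`r3 = Sum.inr 2`. -/
abbrev ISSt (n : ℕ) := (Fin n × Fin 4) ⊕ Fin 3

/-- Colleges: `w = 0`, `p = 1`, `a = 2`, `b = 3`. -/
abbrev ISCo := Fin 4

/-- Types: vertex types `(i, 0)` (= type `2i−1`) and `(i, 1)` (= type `2i`),
edge types `Sum.inr (Sum.inl j)`, and two special types. -/
abbrev ISTy (n m : ℕ) := (Fin n × Fin 2) ⊕ (Fin m ⊕ Fin 2)

/-- The SMI-Diverse instance built from the graph with vertices `Fin n` and
edges `ed : Fin m → Fin n × Fin n`, and the parameter `k`. -/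
def ISInst (n m k : ℕ) (ed : Fin m → Fin n × Fin n) :
    SMTI (ISSt n) ISCo (ISTy n m) where
  acc := fun st c =>
    match st with
    | Sum.inl (_, kk) =>
        if kk = 0 then (c = 0 ∨ c = 1)        -- v_i : w ≻ p
        else if kk = 1 then (c = 0 ∨ c = 1)    -- u_i : p ≻ w
        else if kk = 2 then c = 0              -- x_i : only w
        else c = 1                             -- y_i : only p
    | Sum.inr kk =>
        if kk = 1 then (c = 0 ∨ c = 2 ∨ c = 3) -- r2 : b ≻ w ≻ a
        else (c = 2 ∨ c = 3)                   -- r1, r3 : a and b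
  tau := fun st t =>
    match st, t with
    | Sum.inl (i, kk), Sum.inl (i', kk') =>
        if kk = 0 then decide (i' = i ∧ kk' = 0)
        else if kk = 1 then decide (i' = i ∧ kk' = 1)
        else decide (i' = i)
    | Sum.inl (i, kk), Sum.inr (Sum.inl j) =>
        decide (kk = 0 ∧ ((ed j).1 = i ∨ (ed j).2 = i))
    | Sum.inl _, Sum.inr (Sum.inr _) => false
    | Sum.inr _, Sum.inl _ => false
    | Sum.inr _, Sum.inr (Sum.inl _) => false
    | Sum.inr kk, Sum.inr (Sum.inr z) =>
        if kk = 0 then decide (z = 0) else if kk = 1 then true else decide (z = 1)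
  rankS := fun st c =>
    match st with
    | Sum.inl (_, kk) =>
        if kk = 0 then (if c = 0 then 0 else if c = 1 then 1 else 9)   -- v_i : w ≻ p
        else if kk = 1 then (if c = 1 then 0 else if c = 0 then 1 else 9) -- u_i : p ≻ w
        else if kk = 2 then (if c = 0 then 0 else 9)
        else (if c = 1 then 0 else 9)
    | Sum.inr kk =>
        if kk = 0 then (if c = 3 then 0 else if c = 2 then 1 else 9)   -- r1 : b ≻ a
        else if kk = 1 then
          (if c = 3 then 0 else if c = 0 then 1 else if c = 2 then 2 else 9) -- r2 : b ≻ w ≻ a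
        else (if c = 2 then 0 else if c = 3 then 1 else 9)             -- r3 : a ≻ b
  rankC := fun c st =>
    if c = 0 then
      -- w : u_1 ≻ x_1 ≻ v_1 ≻ ⋯ ≻ u_n ≻ x_n ≻ v_n ≻ r2
      (match st with
       | Sum.inl (i, kk) =>
           if kk = 1 then 3 * (i : ℕ)
           else if kk = 2 then 3 * (i : ℕ) + 1
           else if kk = 0 then 3 * (i : ℕ) + 2
           else 9 + 3 * n
       | Sum.inr kk => if kk = 1 then 3 * n else 9 + 3 * n)
    else if c = 1 then
      -- p : v_1 ≻ y_1 ≻ u_1 ≻ ⋯ ≻ v_n ≻ y_n ≻ u_n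
      (match st with
       | Sum.inl (i, kk) =>
           if kk = 0 then 3 * (i : ℕ)
           else if kk = 3 then 3 * (i : ℕ) + 1
           else if kk = 1 then 3 * (i : ℕ) + 2
           else 9 + 3 * n
       | Sum.inr _ => 9 + 3 * n)
    else if c = 2 then
      -- a : r1 ≻ r2 ≻ r3
      (match st with
       | Sum.inr kk => if kk = 0 then 0 else if kk = 1 then 1 else 2
       | Sum.inl _ => 9)
    else
      -- b : r3 ≻ r2 ≻ r1
      (match st with
       | Sum.inr kk => if kk = 2 then 0 else if kk = 1 then 1 else 2
       | Sum.inl _ => 9)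
  lq := fun _ _ => 0
  uq := fun c t =>
    if c = 0 then 1
    else if c = 1 then
      (match t with
       | Sum.inl _ => 1
       | Sum.inr (Sum.inl _) => 2
       | Sum.inr (Sum.inr _) => 0)
    else
      (match t with
       | Sum.inr (Sum.inr _) => 1
       | _ => 0)
  cap := fun c =>
    if c = 0 then n + k else if c = 1 then 2 * n - k else if c = 2 then 1 else 2

end IndepSet

/-!
Given an independent set `V` with `|V| = k`, the students `v_i, u_i` (`i ∈ V`) and `x_i`
(`i ∉ V`) fill `w` to its capacity `n + k`, the remaining `v_i, u_i` and the `y_i` (`i ∈ V`) go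
to `p`, `r₂` to `a` and `r₁, r₃` to `b`. Every student who would rather move is stopped either
by a full college or by a student of a shared type whom the college prefers.

Conversely, the gadget `r₁, r₂, r₃, a, b` has no stable configuration with `r₂` at `b` or at `w`,
so `r₂` prefers `w`, and `w` must be full. As `x_i` shares a type with `u_i`, at most `n`
students of the forms `u_i, x_i` fit into `w`, so at least `k` of the `v_i` are there; the edge
types make these vertices independent.
-/

namespace SMTI

open Finset

variable {S C T : Type} [Fintype S] [Fintype C] [Fintype T] {I : SMTI S C T}
  {f : S → Option C} {u s s' : S} {w w' : C} {z : T} {U' R : Finset S}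

@[simp]
lemma mem_assigned : u ∈ I.assigned f w ↔ f u = some w := by
  simp [assigned]

lemma typeLoad_eq_card : I.typeLoad f w z = #{u ∈ I.assigned f w | I.tau u z} := by
  rw [typeLoad, card_filter]
  exact sum_congr rfl fun u _ => by cases I.tau u z <;> rfl

lemma typeLoad_le_card (h : ∀ s, f s = some w → I.tau s z → s ∈ R) :
    I.typeLoad f w z ≤ #R :=
  typeLoad_eq_card.trans_le <| card_le_card fun s hs => by
    simp only [mem_filter, mem_assigned] at hs
    exact h s hs.1 hs.2

lemma typeLoad_le_one
    (h : ∀ s s', f s = some w → f s' = some w → I.tau s z → I.tau s' z → s = s') :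
    I.typeLoad f w z ≤ 1 :=
  typeLoad_eq_card.trans_le <| card_le_one.2 fun s hs s' hs' => by
    simp only [mem_filter, mem_assigned] at hs hs'
    exact h s s' hs.1 hs'.1 hs.2 hs'.2

lemma Feasible.eq_of_tau (hf : I.Feasible f) (hs : f s = some w) (hs' : f s' = some w)
    (hz : I.tau s z) (hz' : I.tau s' z) (huq : I.uq w z ≤ 1) : s = s' := by
  by_contra hne
  have h2 : 2 ≤ I.typeLoad f w z := by
    rw [typeLoad_eq_card, ← card_pair hne]
    exact card_le_card fun x hx => by aesop
  have := ((hf w).2 z).2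
  omega

lemma Feasible.eq_of_cap_le_one (hf : I.Feasible f) (hs : f s = some w) (hs' : f s' = some w)
    (hcap : I.cap w ≤ 1) : s = s' :=
  card_le_one.1 ((hf w).1.trans hcap) s (mem_assigned.2 hs) s' (mem_assigned.2 hs')

lemma PrefersTo.ne (h : I.PrefersTo f u w) : f u ≠ some w :=
  fun hu => (h w hu).false

lemma prefersTo_of_eq_none (hu : f u = none) : I.PrefersTo f u w := by
  simp [PrefersTo, hu]

lemma not_blocksWith_of_rankS_le (hu : f u = some w') (h : I.rankS u w' ≤ I.rankS u w) :
    ¬ I.BlocksWith f u w U' :=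
  fun hb => (hb.2.2.1 w' hu).not_ge h

lemma not_blocksWith_of_tau (hs : f s = some w) (hrank : I.rankC w s ≤ I.rankC w u)
    (hu : I.tau u z) (hsz : I.tau s z) (huq : I.uq w z ≤ 1) : ¬ I.BlocksWith f u w U' := by
  rintro ⟨-, -, -, -, hU, -, htype⟩
  -- `w` cannot drop `s` for `u`, and keeping `s` exceeds the quota of `z`.
  have hsU : s ∈ I.assigned f w \ U' :=
    mem_sdiff.2 ⟨mem_assigned.2 hs, fun h => (hU s h).not_ge hrank⟩
  have := single_le_sum (f := fun x => (I.tau x z).toNat) (fun _ _ => Nat.zero_le _) hsU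
  have := (htype z).2
  simp only [hu, hsz, Bool.toNat_true] at *
  omega

lemma not_blocksWith_of_full (hfull : I.cap w ≤ #(I.assigned f w))
    (hrank : ∀ s, f s = some w → I.rankC w s ≤ I.rankC w u) : ¬ I.BlocksWith f u w U' := by
  rintro ⟨-, -, -, hsub, hU, hcap, -⟩
  have : U' = ∅ := eq_empty_of_forall_notMem fun s hs =>
    (hU s hs).not_ge (hrank s (mem_assigned.1 (hsub hs)))
  simp only [this, sdiff_empty] at hcap
  omega

lemma blockingPair_of_subset (hacc : I.acc u w) (hpref : I.PrefersTo f u w)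
    (hsub : U' ⊆ I.assigned f w) (hU : ∀ s ∈ U', I.rankC w u < I.rankC w s)
    (hR : ∀ s, f s = some w → s ∉ U' → s ∈ R) (hcap : #R + 1 ≤ I.cap w)
    (hlq : ∀ z, I.lq w z = 0)
    (huq : ∀ z, (I.tau u z).toNat + ∑ s ∈ R, (I.tau s z).toNat ≤ I.uq w z) :
    I.BlockingPair f u w := by
  have hR' : I.assigned f w \ U' ⊆ R := fun s hs => by
    rw [mem_sdiff, mem_assigned] at hs
    exact hR s hs.1 hs.2
  refine ⟨U', hpref.ne, hacc, hpref, hsub, hU,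
    (Nat.add_le_add_right (card_le_card hR') 1).trans hcap, fun z => ⟨?_, ?_⟩⟩
  · exact (hlq z).trans_le (Nat.zero_le _)
  · exact (Nat.add_le_add_left (sum_le_sum_of_subset hR') _).trans (huq z)

end SMTI

namespace ISInst

open Finset SMTI

variable {n m k : ℕ} {ed : Fin m → Fin n × Fin n}

local notation "𝓘" => ISInst n m k ed

@[simp] abbrev v (i : Fin n) : ISSt n := Sum.inl (i, 0)
@[simp] abbrev u (i : Fin n) : ISSt n := Sum.inl (i, 1)
@[simp] abbrev x (i : Fin n) : ISSt n := Sum.inl (i, 2)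
@[simp] abbrev y (i : Fin n) : ISSt n := Sum.inl (i, 3)
@[simp] abbrev r₁ : ISSt n := Sum.inr 0
@[simp] abbrev r₂ : ISSt n := Sum.inr 1
@[simp] abbrev r₃ : ISSt n := Sum.inr 2
@[simp] abbrev w : ISCo := 0
@[simp] abbrev p : ISCo := 1
@[simp] abbrev a : ISCo := 2
@[simp] abbrev b : ISCo := 3

def IsIndependent (ed : Fin m → Fin n × Fin n) (V : Finset (Fin n)) : Prop :=
  ∀ j, ¬((ed j).1 ∈ V ∧ (ed j).2 ∈ V)

lemma tau_edge {s : ISSt n} {j : Fin m} (h : (𝓘).tau s (Sum.inr (Sum.inl j))) :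
    s = v (ed j).1 ∨ s = v (ed j).2 := by
  rcases s with ⟨i, ks⟩ | ks <;> fin_cases ks <;> simp [ISInst] at h ⊢
  exact h.imp Eq.symm Eq.symm

lemma tau_special {s : ISSt n} {z : Fin 2} (h : (𝓘).tau s (Sum.inr (Sum.inr z))) :
    s = r₁ ∨ s = r₂ ∨ s = r₃ := by
  rcases s with ⟨i, ks⟩ | ks <;> fin_cases ks <;> simp [ISInst] at h ⊢

lemma eq_r_of_acc {s : ISSt n} {c : ISCo} (hc : c = a ∨ c = b) (h : (𝓘).acc s c) :
    s = r₁ ∨ s = r₂ ∨ s = r₃ := by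
  rcases s with ⟨i, ks⟩ | ks <;> fin_cases ks <;> rcases hc with rfl | rfl <;> simp [ISInst] at h ⊢

lemma eq_of_acc_w {s : ISSt n} (h : (𝓘).acc s w) :
    (∃ i, s = v i ∨ s = u i ∨ s = x i) ∨ s = r₂ := by
  rcases s with ⟨i, ks⟩ | ks <;> fin_cases ks <;> simp [ISInst] at h ⊢

lemma toNat_tau_le_uq {s : ISSt n} {c : ISCo} (hs : s = r₁ ∨ s = r₂ ∨ s = r₃)
    (hc : c = a ∨ c = b) (z : ISTy n m) : ((𝓘).tau s z).toNat ≤ (𝓘).uq c z := by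
  rcases hs with rfl | rfl | rfl <;> rcases hc with rfl | rfl <;> rcases z with _ | _ | z <;>
    simp [ISInst] <;> fin_cases z <;> simp

lemma toNat_tau_r₁_add_toNat_tau_r₃_le_uq_b (z : ISTy n m) :
    ((𝓘).tau r₁ z).toNat + ((𝓘).tau r₃ z).toNat ≤ (𝓘).uq b z := by
  rcases z with _ | _ | z <;> simp [ISInst]
  fin_cases z <;> simp

lemma card_image_inl_union {k₁ k₂ k₃ : Fin 4} (h₁₂ : k₁ ≠ k₂) (h₁₃ : k₁ ≠ k₃)
    (h₂₃ : k₂ ≠ k₃) (A B C : Finset (Fin n)) :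
    #(A.image (fun i => (Sum.inl (i, k₁) : ISSt n)) ∪ B.image (fun i => Sum.inl (i, k₂)) ∪
      C.image (fun i => Sum.inl (i, k₃))) = #A + #B + #C := by
  rw [card_union_of_disjoint (by simp [disjoint_left]; grind),
    card_union_of_disjoint (by simp [disjoint_left]; grind)]
  rw [card_image_of_injective _ fun i j h => by simpa using h,
    card_image_of_injective _ fun i j h => by simpa using h,
    card_image_of_injective _ fun i j h => by simpa using h]

section Forward

def matchingOf (V : Finset (Fin n)) : ISSt n → Option ISCo
  | Sum.inl (i, 0) => if i ∈ V then some w else some p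
  | Sum.inl (i, 1) => if i ∈ V then some w else some p
  | Sum.inl (i, 2) => if i ∈ V then none else some w
  | Sum.inl (i, 3) => if i ∈ V then some p else none
  | Sum.inr 0 => some b
  | Sum.inr 1 => some a
  | Sum.inr 2 => some b

variable (V : Finset (Fin n))

lemma matchingOf_isMatching : (𝓘).IsMatching (matchingOf V) := by
  rintro (⟨i, kk⟩ | kk) c hc <;> fin_cases kk <;> simp [matchingOf] at hc <;>
    aesop (add simp ISInst)

lemma assigned_matchingOf_w :
    (𝓘).assigned (matchingOf V) w = V.image v ∪ V.image u ∪ Vᶜ.image x := by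
  ext (⟨i, kk⟩ | kk)
  · fin_cases kk <;> by_cases hi : i ∈ V <;> simp [matchingOf, hi]
  · fin_cases kk <;> simp [matchingOf]

lemma assigned_matchingOf_p :
    (𝓘).assigned (matchingOf V) p = Vᶜ.image v ∪ Vᶜ.image u ∪ V.image y := by
  ext (⟨i, kk⟩ | kk)
  · fin_cases kk <;> by_cases hi : i ∈ V <;> simp [matchingOf, hi]
  · fin_cases kk <;> simp [matchingOf]

lemma assigned_matchingOf_a : (𝓘).assigned (matchingOf V) a = {r₂} := by
  ext (⟨i, kk⟩ | kk)
  · fin_cases kk <;> by_cases hi : i ∈ V <;> simp [matchingOf, hi]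
  · fin_cases kk <;> simp [matchingOf]

lemma assigned_matchingOf_b : (𝓘).assigned (matchingOf V) b = {r₁, r₃} := by
  ext (⟨i, kk⟩ | kk)
  · fin_cases kk <;> by_cases hi : i ∈ V <;> simp [matchingOf, hi]
  · fin_cases kk <;> simp [matchingOf]

lemma card_assigned_matchingOf_w : #((𝓘).assigned (matchingOf V) w) = n + #V := by
  rw [assigned_matchingOf_w, card_image_inl_union (by decide) (by decide) (by decide), card_compl]
  have := card_le_univ V
  simp only [Fintype.card_fin] at this ⊢
  omega

lemma card_assigned_matchingOf_p : #((𝓘).assigned (matchingOf V) p) = 2 * n - #V := by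
  rw [assigned_matchingOf_p, card_image_inl_union (by decide) (by decide) (by decide), card_compl]
  have := card_le_univ V
  simp only [Fintype.card_fin] at this ⊢
  omega

lemma matchingOf_eq_of_tau_w (hV : IsIndependent ed V) {s s' : ISSt n} {z : ISTy n m}
    (hs : matchingOf V s = some w) (hs' : matchingOf V s' = some w)
    (hz : (𝓘).tau s z) (hz' : (𝓘).tau s' z) : s = s' := by
  rcases s with ⟨i, ks⟩ | ks <;> rcases s' with ⟨i', ks'⟩ | ks' <;> fin_cases ks <;>
    fin_cases ks' <;> simp [matchingOf] at hs hs' <;> rcases z with ⟨i₀, t⟩ | j | z <;>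
    simp [ISInst] at hz hz' <;> aesop (add simp IsIndependent)

lemma matchingOf_eq_of_tau_p {s s' : ISSt n} {i : Fin n} {t : Fin 2}
    (hs : matchingOf V s = some p) (hs' : matchingOf V s' = some p)
    (hz : (𝓘).tau s (Sum.inl (i, t))) (hz' : (𝓘).tau s' (Sum.inl (i, t))) : s = s' := by
  rcases s with ⟨i, ks⟩ | ks <;> rcases s' with ⟨i', ks'⟩ | ks' <;> fin_cases ks <;>
    fin_cases ks' <;> simp [matchingOf] at hs hs' <;> simp [ISInst] at hz hz' <;> aesop

lemma matchingOf_feasible (hV : IsIndependent ed V) (hk : #V = k) :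
    (𝓘).Feasible (matchingOf V) := by
  intro c
  obtain rfl | rfl | rfl | rfl : c = w ∨ c = p ∨ c = a ∨ c = b := by fin_cases c <;> simp
  · refine ⟨(card_assigned_matchingOf_w V).trans_le (by simp [ISInst, hk]), fun z =>
      ⟨Nat.zero_le _, typeLoad_le_one fun s s' => matchingOf_eq_of_tau_w V hV⟩⟩
  · refine ⟨(card_assigned_matchingOf_p V).trans_le (by simp [ISInst, hk]), fun z =>
      ⟨Nat.zero_le _, ?_⟩⟩
    rcases z with ⟨i, t⟩ | j | z
    · exact typeLoad_le_one fun s s' => matchingOf_eq_of_tau_p V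
    · refine (typeLoad_le_card (R := {v (ed j).1, v (ed j).2}) fun s _ hs => ?_).trans
        card_le_two
      simpa using tau_edge hs
    · refine (typeLoad_le_card (R := ∅) fun s hs hz => ?_).trans (Nat.zero_le _)
      rcases tau_special hz with rfl | rfl | rfl <;> simp [matchingOf] at hs
  · refine ⟨by rw [assigned_matchingOf_a, card_singleton]; exact le_rfl, fun z =>
      ⟨Nat.zero_le _, ?_⟩⟩
    rw [typeLoad, assigned_matchingOf_a, sum_singleton]
    exact toNat_tau_le_uq (Or.inr (Or.inl rfl)) (Or.inl rfl) z
  · refine ⟨by rw [assigned_matchingOf_b, card_pair (by simp)]; exact le_rfl, fun z =>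
      ⟨Nat.zero_le _, ?_⟩⟩
    rw [typeLoad, assigned_matchingOf_b, sum_pair (by simp)]
    exact toNat_tau_r₁_add_toNat_tau_r₃_le_uq_b z

lemma matchingOf_not_blocksWith_inl (i : Fin n) (ks : Fin 4) (c : ISCo)
    (U' : Finset (ISSt n)) : ¬ (𝓘).BlocksWith (matchingOf V) (Sum.inl (i, ks)) c U' := by
  intro hb
  have hacc := hb.2.1
  by_cases hi : i ∈ V <;> fin_cases ks
  · exact not_blocksWith_of_rankS_le (w' := w) (by simp [matchingOf, hi]) (Nat.zero_le _) hb
  · obtain rfl | rfl : c = w ∨ c = p := by simpa [ISInst] using hacc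
    · exact hb.1 (by simp [matchingOf, hi])
    · exact not_blocksWith_of_tau (s := y i) (z := Sum.inl (i, 1)) (by simp [matchingOf, hi])
        (by simp [ISInst]) (by simp [ISInst]) (by simp [ISInst]) le_rfl hb
  · obtain rfl : c = w := by simpa [ISInst] using hacc
    exact not_blocksWith_of_tau (s := u i) (z := Sum.inl (i, 1)) (by simp [matchingOf, hi])
      (by simp [ISInst]) (by simp [ISInst]) (by simp [ISInst]) le_rfl hb
  · exact not_blocksWith_of_rankS_le (w' := p) (by simp [matchingOf, hi]) (Nat.zero_le _) hb
  · obtain rfl | rfl : c = w ∨ c = p := by simpa [ISInst] using hacc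
    · exact not_blocksWith_of_tau (s := x i) (z := Sum.inl (i, 0)) (by simp [matchingOf, hi])
        (by simp [ISInst]) (by simp [ISInst]) (by simp [ISInst]) le_rfl hb
    · exact hb.1 (by simp [matchingOf, hi])
  · exact not_blocksWith_of_rankS_le (w' := p) (by simp [matchingOf, hi]) (Nat.zero_le _) hb
  · exact not_blocksWith_of_rankS_le (w' := w) (by simp [matchingOf, hi]) (Nat.zero_le _) hb
  · obtain rfl : c = p := by simpa [ISInst] using hacc
    exact not_blocksWith_of_tau (s := v i) (z := Sum.inl (i, 0)) (by simp [matchingOf, hi])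
      (by simp [ISInst]) (by simp [ISInst]) (by simp [ISInst]) le_rfl hb

lemma matchingOf_not_blocksWith_inr (hk : #V = k) (ks : Fin 3) (c : ISCo)
    (U' : Finset (ISSt n)) : ¬ (𝓘).BlocksWith (matchingOf V) (Sum.inr ks) c U' := by
  intro hb
  have hacc := hb.2.1
  fin_cases ks
  · exact not_blocksWith_of_rankS_le (w' := b) (by simp [matchingOf]) (Nat.zero_le _) hb
  · obtain rfl | rfl | rfl : c = w ∨ c = a ∨ c = b := by simpa [ISInst] using hacc
    · refine not_blocksWith_of_full (by rw [card_assigned_matchingOf_w, hk]; exact le_rfl) ?_ hb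
      rintro (⟨i, ks⟩ | ks) hs <;> fin_cases ks <;> simp [matchingOf] at hs <;>
        simp [ISInst]
      omega
    · exact hb.1 (by simp [matchingOf])
    · exact not_blocksWith_of_tau (s := r₃) (z := Sum.inr (Sum.inr 1)) (by simp [matchingOf])
        (by simp [ISInst]) (by simp [ISInst]) (by simp [ISInst]) le_rfl hb
  · obtain rfl | rfl : c = a ∨ c = b := by simpa [ISInst] using hacc
    · refine not_blocksWith_of_full (by rw [assigned_matchingOf_a]; exact le_rfl) ?_ hb
      intro s hs
      obtain rfl : s = r₂ := by
        simpa [assigned_matchingOf_a] using (mem_assigned (I := 𝓘)).2 hs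
      simp [ISInst]
    · exact hb.1 (by simp [matchingOf])

lemma matchingOf_stable (hk : #V = k) : (𝓘).Stable (matchingOf V) := by
  rintro (⟨i, ks⟩ | ks) c ⟨U', hb⟩
  · exact matchingOf_not_blocksWith_inl V i ks c U' hb
  · exact matchingOf_not_blocksWith_inr V hk ks c U' hb

end Forward

section Reverse

variable {f : ISSt n → Option ISCo}

lemma matching_r₁_r₃_cases (hm : (𝓘).IsMatching f) {s : ISSt n} (hs : s = r₁ ∨ s = r₃) :
    f s = none ∨ f s = some a ∨ f s = some b := by
  rcases h : f s with _ | c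
  · simp
  · have := hm s c h
    rcases hs with rfl | rfl <;> simp [ISInst] at this <;> simp [this]

lemma matching_r₂_cases (hm : (𝓘).IsMatching f) :
    f r₂ = none ∨ f r₂ = some w ∨ f r₂ = some a ∨ f r₂ = some b := by
  rcases h : f r₂ with _ | c
  · simp
  · have := hm r₂ c h
    simp [ISInst] at this
    simp [this]

lemma r₃_at_a_or_b (hm : (𝓘).IsMatching f) (hs : (𝓘).Stable f) :
    f r₃ = some a ∨ f r₃ = some b := by
  refine (matching_r₁_r₃_cases hm (Or.inr rfl)).resolve_left fun h3 => hs r₃ b ?_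
  refine blockingPair_of_subset (U' := (𝓘).assigned f b) (R := ∅) (by simp [ISInst])
    (prefersTo_of_eq_none h3) subset_rfl (fun s hs => ?_)
    (fun s hsb h => absurd (mem_assigned.2 hsb) h) (by simp [ISInst]) (fun _ => rfl)
    (fun z => by simpa using toNat_tau_le_uq (Or.inr (Or.inr rfl)) (Or.inr rfl) z)
  have hsb := mem_assigned.1 hs
  rcases eq_r_of_acc (Or.inr rfl) (hm s b hsb) with rfl | rfl | rfl
  · simp [ISInst]
  · simp [ISInst]
  · simp [h3] at hsb

lemma r₂_not_at_b (hm : (𝓘).IsMatching f) (hf : (𝓘).Feasible f) (hs : (𝓘).Stable f) :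
    f r₂ ≠ some b := by
  intro h2
  have h3 : f r₃ = some a := (r₃_at_a_or_b hm hs).resolve_right fun h3 =>
    absurd (hf.eq_of_tau h2 h3 (z := Sum.inr (Sum.inr 1)) (by simp [ISInst]) (by simp [ISInst])
      le_rfl) (by simp)
  have h1 : f r₁ = none := by
    rcases matching_r₁_r₃_cases hm (Or.inl rfl) with h1 | h1 | h1
    · exact h1
    · exact absurd (hf.eq_of_cap_le_one h1 h3 le_rfl) (by simp)
    · exact absurd (hf.eq_of_tau h1 h2 (z := Sum.inr (Sum.inr 0)) (by simp [ISInst])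
        (by simp [ISInst]) le_rfl) (by simp)
  refine hs r₁ a (blockingPair_of_subset (U' := {r₃}) (R := ∅) (by simp [ISInst])
    (prefersTo_of_eq_none h1) (by simpa using h3) (by simp [ISInst]) (fun s hs hs' => ?_)
    (by simp [ISInst]) (fun _ => rfl)
    (fun z => by simpa using toNat_tau_le_uq (Or.inl rfl) (Or.inl rfl) z))
  exact absurd (hf.eq_of_cap_le_one hs h3 le_rfl) (by simpa using hs')

lemma r₂_not_at_w (hm : (𝓘).IsMatching f) (hs : (𝓘).Stable f) : f r₂ ≠ some w := by
  intro h2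
  rcases r₃_at_a_or_b hm hs with h3 | h3
  · refine hs r₂ b (blockingPair_of_subset (U' := (𝓘).assigned f b) (R := ∅) (by simp [ISInst])
      (fun c hc => ?_) subset_rfl (fun s hs => ?_) (fun s hsb h => absurd (mem_assigned.2 hsb) h)
      (by simp [ISInst]) (fun _ => rfl)
      (fun z => by simpa using toNat_tau_le_uq (Or.inr (Or.inl rfl)) (Or.inr rfl) z))
    · obtain rfl : w = c := by simpa [h2] using hc
      simp [ISInst]
    · have hsb := mem_assigned.1 hs
      rcases eq_r_of_acc (Or.inr rfl) (hm s b hsb) with rfl | rfl | rfl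
      · simp [ISInst]
      · simp [h2] at hsb
      · simp [h3] at hsb
  by_cases h1 : f r₁ = some a
  · refine hs r₁ b (blockingPair_of_subset (U' := ∅) (R := {r₃}) (by simp [ISInst])
      (fun c hc => ?_) (empty_subset _) (by simp) (fun s hsb _ => ?_) (by simp [ISInst])
      (fun _ => rfl) (fun z => by simpa using toNat_tau_r₁_add_toNat_tau_r₃_le_uq_b z))
    · obtain rfl : a = c := by simpa [h1] using hc
      simp [ISInst]
    · rcases eq_r_of_acc (Or.inr rfl) (hm s b hsb) with rfl | rfl | rfl
      · simp [h1] at hsb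
      · simp [h2] at hsb
      · simp
  · refine hs r₃ a (blockingPair_of_subset (U' := ∅) (R := ∅) (by simp [ISInst])
      (fun c hc => ?_) (empty_subset _) (by simp) (fun s hsa _ => ?_) (by simp [ISInst])
      (fun _ => rfl)
      (fun z => by simpa using toNat_tau_le_uq (Or.inr (Or.inr rfl)) (Or.inl rfl) z))
    · obtain rfl : b = c := by simpa [h3] using hc
      simp [ISInst]
    · rcases eq_r_of_acc (Or.inl rfl) (hm s a hsa) with rfl | rfl | rfl
      · exact absurd hsa h1
      · simp [h2] at hsa
      · simp [h3] at hsa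

lemma r₂_prefersTo_w (hm : (𝓘).IsMatching f) (hf : (𝓘).Feasible f) (hs : (𝓘).Stable f) :
    (𝓘).PrefersTo f r₂ w := by
  intro c hc
  rcases matching_r₂_cases hm with h | h | h | h <;> rw [h] at hc <;> cases hc
  · exact absurd h (r₂_not_at_w hm hs)
  · simp [ISInst]
  · exact absurd h (r₂_not_at_b hm hf hs)

/-- Otherwise `r₂`, who has only the special types, would take a free seat at `w`. -/
lemma le_card_assigned_w (hm : (𝓘).IsMatching f) (hf : (𝓘).Feasible f) (hs : (𝓘).Stable f) :
    n + k ≤ #((𝓘).assigned f w) := by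
  by_contra! hlt
  refine hs r₂ w (blockingPair_of_subset (U' := ∅) (R := (𝓘).assigned f w) (by simp [ISInst])
    (r₂_prefersTo_w hm hf hs) (empty_subset _) (by simp) (fun s hsw _ => mem_assigned.2 hsw) hlt
    (fun _ => rfl) ?_)
  rintro (z | z | z)
  · exact (zero_add _).trans_le ((hf w).2 _).2
  · exact (zero_add _).trans_le ((hf w).2 _).2
  · have : (𝓘).typeLoad f w (Sum.inr (Sum.inr z)) = 0 := by
      refine Nat.le_zero.1 (typeLoad_le_card (R := ∅) fun s hsw hz => ?_)
      rcases eq_of_acc_w (hm s w hsw) with ⟨i, rfl | rfl | rfl⟩ | rfl <;> simp [ISInst] at hz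
      exact absurd hsw (r₂_not_at_w hm hs)
    exact (add_le_add (Bool.toNat_le _) this.le).trans le_rfl

lemma card_assigned_w_le (hm : (𝓘).IsMatching f) (hf : (𝓘).Feasible f) (hr₂ : f r₂ ≠ some w) :
    #((𝓘).assigned f w) ≤ n + #{i | f (v i) = some w} := by
  set A : Finset (Fin n) := {i | f (v i) = some w}
  set B : Finset (Fin n) := {i | f (u i) = some w}
  set X : Finset (Fin n) := {i | f (x i) = some w}
  have hBX : Disjoint B X := disjoint_left.2 fun i hB hX => by
    simp only [B, X, mem_filter, mem_univ, true_and] at hB hX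
    exact absurd (hf.eq_of_tau hB hX (z := Sum.inl (i, 1)) (by simp [ISInst]) (by simp [ISInst])
      le_rfl) (by simp)
  have hsub : (𝓘).assigned f w ⊆ A.image v ∪ (B.image u ∪ X.image x) := by
    intro s hs
    rw [mem_assigned] at hs
    rcases eq_of_acc_w (hm s w hs) with ⟨i, rfl | rfl | rfl⟩ | rfl
    · simp [A, hs]
    · simp [B, hs]
    · simp [X, hs]
    · exact absurd hs hr₂
  calc #((𝓘).assigned f w)
      ≤ #(A.image v) + (#(B.image u) + #(X.image x)) :=
        (card_le_card hsub).trans ((card_union_le _ _).trans (by gcongr; exact card_union_le _ _))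
    _ ≤ #A + (#B + #X) := by gcongr <;> exact card_image_le
    _ = #A + #(B ∪ X) := by rw [card_union_of_disjoint hBX]
    _ ≤ #A + n := by gcongr; simpa using card_le_univ (B ∪ X)
    _ = n + #A := add_comm _ _

lemma isIndependent_of_feasible (hloop : ∀ j, (ed j).1 ≠ (ed j).2) (hf : (𝓘).Feasible f) :
    IsIndependent ed {i | f (v i) = some w} := by
  rintro j ⟨h₁, h₂⟩
  simp only [mem_filter, mem_univ, true_and] at h₁ h₂
  have := hf.eq_of_tau h₁ h₂ (z := Sum.inr (Sum.inl j)) (by simp [ISInst]) (by simp [ISInst])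
    le_rfl
  exact hloop j (by simpa using this)

end Reverse

end ISInst

theorem stmt11_general (n m k : ℕ) (ed : Fin m → Fin n × Fin n)
    (hloop : ∀ j, (ed j).1 ≠ (ed j).2) :
    (∃ V' : Finset (Fin n), k ≤ V'.card ∧
        ∀ j : Fin m, ¬((ed j).1 ∈ V' ∧ (ed j).2 ∈ V')) ↔
      ∃ f : ISSt n → Option ISCo,
        (ISInst n m k ed).IsMatching f ∧ (ISInst n m k ed).Feasible f ∧
        (ISInst n m k ed).Stable f := by
  constructor
  · rintro ⟨V', hk, hV'⟩
    obtain ⟨V, hVV', rfl⟩ := Finset.exists_subset_card_eq hk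
    have hV : ISInst.IsIndependent ed V := fun j hj => hV' j ⟨hVV' hj.1, hVV' hj.2⟩
    exact ⟨ISInst.matchingOf V, ISInst.matchingOf_isMatching V,
      ISInst.matchingOf_feasible V hV rfl, ISInst.matchingOf_stable V rfl⟩
  · rintro ⟨f, hm, hf, hs⟩
    refine ⟨_, ?_, ISInst.isIndependent_of_feasible hloop hf⟩
    have := ISInst.le_card_assigned_w hm hf hs
    have := ISInst.card_assigned_w_le hm hf (ISInst.r₂_not_at_w hm hs)
    omega

/-- Let `G` be a graph on vertices `Fin n` with edges
`ed : Fin m → Fin n × Fin n` (loopless, with pairwise distinct edges) and let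
`1 ≤ k ≤ n`.  Then `G` has an independent set of size at least `k` iff the
constructed SMI-Diverse instance admits a feasible and stable matching. -/
theorem stmt11 (n m k : ℕ) (ed : Fin m → Fin n × Fin n)
    (hloop : ∀ j, (ed j).1 ≠ (ed j).2)
    (hedinj : ∀ j j' : Fin m,
      ({(ed j).1, (ed j).2} : Finset (Fin n)) = {(ed j').1, (ed j').2} → j = j')
    (hk1 : 1 ≤ k) (hk2 : k ≤ n) :
    (∃ V' : Finset (Fin n), k ≤ V'.card ∧
        ∀ j : Fin m, ¬((ed j).1 ∈ V' ∧ (ed j).2 ∈ V')) ↔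
      ∃ f : ISSt n → Option ISCo,
        (ISInst n m k ed).IsMatching f ∧ (ISInst n m k ed).Feasible f ∧
        (ISInst n m k ed).Stable f :=
  stmt11_general n m k ed hloop
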